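/- Let r, s > 0 and p ∈ (0,1) be constants and let f(x, y) = x^s/(x+y)^r. Define the Taylor remainder Q(x, y) = f(x, y) − f(np, mp) − ∇f(np, mp)·(x − np, y − mp). For every C' > 0 there exists a constant C > 0 such that for all sufficiently large n, m and all real x, y with |x − np| ≤ C'·√(n·log n) and |y − mp| ≤ C'·√(m·log m), one has |Q(x, y)| ≤ C · n^{s−2} · log(n+m) / (n+m)^{r−1}. -/

import Mathlib

open Real Filter

/-- The ratio function `f(x, y) = x^s / (x+y)^r` as a function on `ℝ × ℝ` (real powers). -/
noncomputable def ratioFunP (r s : ℝ) (q : ℝ × ℝ) : ℝ := q.1 ^ s / (q.1 + q.2) ^ r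

/-- The first-order Taylor remainder of `f(x,y) = x^s/(x+y)^r` about `(np, mp)`:
`Q(x, y) = f(x, y) − f(np, mp) − ∇f(np, mp)·(x − np, y − mp)`. -/
noncomputable def taylorRem (r s : ℝ) (np mp x y : ℝ) : ℝ :=
  ratioFunP r s (x, y) - ratioFunP r s (np, mp) -
    fderiv ℝ (ratioFunP r s) (np, mp) (x - np, y - mp)

/-! Along the segment from `(a, c) = (np, mp)` to `(x, y)` the function is
`g t = (a + tβ)^s (a + c + tδ)^(-r)` with `β = x - a`, `δ = (x - a) + (y - c)`, and
`Q(x, y) = g 1 - g 0 - g' 0`, so `|Q| ≤ sup |g''|` on `[0, 1]`. In the window the deviations are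
`o(n)` and `o(m)`, so `a + tβ` and `a + c + tδ` stay within a factor `2` of `a` and `a + c`, and
both deviations are at most `D = C'√((n + m) log (n + m))`. Each of the three terms of `g''` is
then `O(D² a^(s-2) (a + c)^(-r))`, since the two terms with `δ` carry extra factors
`a / (a + c) ≤ 1`. With `a = np` this is `O(n^(s-2) log (n + m) / (n + m)^(r-1))`. -/

open Set Topology

theorem abs_sub_sub_deriv_le_of_abs_deriv2_le {g g' g'' : ℝ → ℝ} {M : ℝ}
    (hg : ∀ t ∈ Icc (0 : ℝ) 1, HasDerivAt g (g' t) t)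
    (hg' : ∀ t ∈ Icc (0 : ℝ) 1, HasDerivAt g' (g'' t) t)
    (hM : ∀ t ∈ Icc (0 : ℝ) 1, |g'' t| ≤ M) :
    |g 1 - g 0 - g' 0| ≤ M := by
  have hM0 : 0 ≤ M := (abs_nonneg _).trans (hM 0 (left_mem_Icc.2 zero_le_one))
  have hg'_sub : ∀ t ∈ Icc (0 : ℝ) 1, ‖g' t - g' 0‖ ≤ M * (t - 0) :=
    norm_image_sub_le_of_norm_deriv_le_segment' (fun t ht => (hg' t ht).hasDerivWithinAt)
      fun t ht => hM t (Ico_subset_Icc_self ht)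
  have key : ‖(g 1 - 1 * g' 0) - (g 0 - 0 * g' 0)‖ ≤ M :=
    norm_image_sub_le_of_norm_deriv_le_segment_01'
      (fun t ht => ((hg t ht).sub ((hasDerivAt_id t).mul_const (g' 0))).hasDerivWithinAt)
      fun t ht => by
        have := hg'_sub t (Ico_subset_Icc_self ht)
        simp only [one_mul, sub_zero] at this ⊢
        nlinarith [ht.1, ht.2]
  rw [Real.norm_eq_abs] at key
  convert key using 2
  ring

theorem rpow_le_two_rpow_mul_rpow {A u e E : ℝ} (hA : 0 < A) (hu₁ : A / 2 ≤ u)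
    (hu₂ : u ≤ 2 * A) (he : |e| ≤ E) : u ^ e ≤ 2 ^ E * A ^ e := by
  have hu : 0 < u := by linarith
  calc u ^ e = (u / A) ^ e * A ^ e := by
        rw [Real.div_rpow hu.le hA.le, div_mul_cancel₀ _ (by positivity)]
    _ ≤ 2 ^ |e| * A ^ e := by
      gcongr
      rcases le_or_gt 0 e with he0 | he0
      · rw [abs_of_nonneg he0]
        exact Real.rpow_le_rpow (by positivity) ((div_le_iff₀ hA).2 (by linarith)) he0
      · calc (u / A) ^ e ≤ (1 / 2) ^ e :=
              Real.rpow_le_rpow_of_nonpos (by norm_num) ((le_div_iff₀ hA).2 (by linarith)) he0.le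
          _ = 2 ^ |e| := by
              rw [abs_of_neg he0, one_div, Real.inv_rpow (by norm_num), Real.rpow_neg (by norm_num)]
    _ ≤ 2 ^ E * A ^ e := by gcongr; norm_num

theorem rpow_add_mul_rpow_sub_le {α γ k : ℝ} (hα : 0 < α) (hαγ : α ≤ γ) (e f : ℝ)
    (hk : 0 ≤ k) : α ^ (e + k) * γ ^ (f - k) ≤ α ^ e * γ ^ f := by
  have hγ : 0 < γ := hα.trans_le hαγ
  calc α ^ (e + k) * γ ^ (f - k) = α ^ e * γ ^ f * (α / γ) ^ k := by
        rw [Real.rpow_add hα, Real.rpow_sub hγ, Real.div_rpow hα.le hγ.le]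
        field_simp
    _ ≤ α ^ e * γ ^ f * 1 := by
        gcongr
        exact Real.rpow_le_one (by positivity) ((div_le_one hγ).2 hαγ) hk
    _ = α ^ e * γ ^ f := mul_one _

section AffineRpow

variable (s r α β γ δ : ℝ)

theorem hasDerivAt_rpow_mul_rpow_affine {t : ℝ} (hu : α + t * β ≠ 0)
    (hw : γ + t * δ ≠ 0) :
    HasDerivAt (fun t => (α + t * β) ^ s * (γ + t * δ) ^ (-r))
      (s * β * (α + t * β) ^ (s - 1) * (γ + t * δ) ^ (-r) -
        r * δ * (α + t * β) ^ s * (γ + t * δ) ^ (-r - 1)) t := by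
  have hu' := ((hasDerivAt_mul_const β).const_add α).rpow_const (p := s) (Or.inl hu)
  have hw' := ((hasDerivAt_mul_const δ).const_add γ).rpow_const (p := -r) (Or.inl hw)
  refine (hu'.mul hw').congr_deriv ?_
  ring

theorem hasDerivAt_deriv_rpow_mul_rpow_affine {t : ℝ} (hu : α + t * β ≠ 0)
    (hw : γ + t * δ ≠ 0) :
    HasDerivAt (fun t => s * β * (α + t * β) ^ (s - 1) * (γ + t * δ) ^ (-r) -
        r * δ * (α + t * β) ^ s * (γ + t * δ) ^ (-r - 1))
      (s * (s - 1) * β ^ 2 * (α + t * β) ^ (s - 2) * (γ + t * δ) ^ (-r) -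
        2 * s * r * β * δ * (α + t * β) ^ (s - 1) * (γ + t * δ) ^ (-r - 1) +
        r * (r + 1) * δ ^ 2 * (α + t * β) ^ s * (γ + t * δ) ^ (-r - 2)) t := by
  have hu' (e : ℝ) := ((hasDerivAt_mul_const β).const_add α).rpow_const (p := e) (Or.inl hu)
  have hw' (e : ℝ) := ((hasDerivAt_mul_const δ).const_add γ).rpow_const (p := e) (Or.inl hw)
  refine ((((hu' (s - 1)).const_mul (s * β)).mul (hw' (-r))).sub
    (((hu' s).const_mul (r * δ)).mul (hw' (-r - 1)))).congr_deriv ?_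
  rw [show s - 1 - 1 = s - 2 by ring, show -r - 1 - 1 = -r - 2 by ring]
  ring

end AffineRpow

noncomputable def taylorConst (r s : ℝ) : ℝ :=
  (|s * (s - 1)| + 4 * |s * r| + 4 * |r * (r + 1)|) * 2 ^ (|s| + |r| + 4)

theorem taylorConst_nonneg (r s : ℝ) : 0 ≤ taylorConst r s := by
  unfold taylorConst; positivity

theorem abs_deriv2_rpow_mul_rpow_affine_le (r s : ℝ) {α β γ δ D t : ℝ} (hα : 0 < α)
    (hαγ : α ≤ γ) (hu₁ : α / 2 ≤ α + t * β) (hu₂ : α + t * β ≤ 2 * α)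
    (hw₁ : γ / 2 ≤ γ + t * δ) (hw₂ : γ + t * δ ≤ 2 * γ) (hβ : |β| ≤ D)
    (hδ : |δ| ≤ 2 * D) :
    |s * (s - 1) * β ^ 2 * (α + t * β) ^ (s - 2) * (γ + t * δ) ^ (-r) -
        2 * s * r * β * δ * (α + t * β) ^ (s - 1) * (γ + t * δ) ^ (-r - 1) +
        r * (r + 1) * δ ^ 2 * (α + t * β) ^ s * (γ + t * δ) ^ (-r - 2)| ≤
      taylorConst r s * (D ^ 2 * (α ^ (s - 2) * γ ^ (-r))) := by
  have hγ : 0 < γ := hα.trans_le hαγ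
  set u := α + t * β
  set w := γ + t * δ
  have hu : 0 < u := by linarith
  have hw : 0 < w := by linarith
  set P := α ^ (s - 2) * γ ^ (-r)
  have hpow (e₁ e₂ : ℝ) (he₁ : |e₁| ≤ |s| + 2) (he₂ : |e₂| ≤ |r| + 2) :
      u ^ e₁ * w ^ e₂ ≤ 2 ^ (|s| + |r| + 4) * (α ^ e₁ * γ ^ e₂) := by
    calc u ^ e₁ * w ^ e₂ ≤ (2 ^ (|s| + 2) * α ^ e₁) * (2 ^ (|r| + 2) * γ ^ e₂) := by
          gcongr
          · exact rpow_le_two_rpow_mul_rpow hα hu₁ hu₂ he₁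
          · exact rpow_le_two_rpow_mul_rpow hγ hw₁ hw₂ he₂
      _ = 2 ^ (|s| + |r| + 4) * (α ^ e₁ * γ ^ e₂) := by
          rw [mul_mul_mul_comm, ← Real.rpow_add two_pos]
          ring_nf
  have hP₁ : α ^ (s - 1) * γ ^ (-r - 1) ≤ P := by
    simpa [show s - 2 + 1 = s - 1 by ring] using
      rpow_add_mul_rpow_sub_le hα hαγ (s - 2) (-r) zero_le_one
  have hP₂ : α ^ s * γ ^ (-r - 2) ≤ P := by
    simpa [show s - 2 + 2 = s by ring] using
      rpow_add_mul_rpow_sub_le hα hαγ (s - 2) (-r) zero_le_two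
  have hβδ : |β * δ| ≤ 2 * D ^ 2 := by
    rw [abs_mul]; nlinarith [abs_nonneg β, abs_nonneg δ]
  have hβ2 : β ^ 2 ≤ D ^ 2 := by rw [← sq_abs]; gcongr
  have hδ2 : δ ^ 2 ≤ 4 * D ^ 2 := by nlinarith [sq_abs δ, abs_nonneg δ]
  have h₁ : |s * (s - 1) * β ^ 2 * u ^ (s - 2) * w ^ (-r)| ≤
      |s * (s - 1)| * D ^ 2 * (2 ^ (|s| + |r| + 4) * P) := by
    rw [mul_assoc _ (u ^ _), abs_mul, abs_mul,
      abs_of_nonneg (by positivity : 0 ≤ u ^ (s - 2) * w ^ (-r)), abs_pow, sq_abs]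
    gcongr |s * (s - 1)| * ?_ * ?_
    exact hpow (s - 2) (-r) (by grind) (by grind)
  have h₂ : |2 * s * r * β * δ * u ^ (s - 1) * w ^ (-r - 1)| ≤
      2 * |s * r| * (2 * D ^ 2) * (2 ^ (|s| + |r| + 4) * P) := by
    rw [show 2 * s * r * β * δ * u ^ (s - 1) * w ^ (-r - 1) =
        2 * (s * r) * (β * δ) * (u ^ (s - 1) * w ^ (-r - 1)) by ring, abs_mul, abs_mul, abs_mul,
      abs_of_nonneg (by positivity : 0 ≤ u ^ (s - 1) * w ^ (-r - 1)), abs_two]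
    gcongr 2 * |s * r| * ?_ * ?_
    exact (hpow (s - 1) (-r - 1) (by grind) (by grind)).trans (by gcongr)
  have h₃ : |r * (r + 1) * δ ^ 2 * u ^ s * w ^ (-r - 2)| ≤
      |r * (r + 1)| * (4 * D ^ 2) * (2 ^ (|s| + |r| + 4) * P) := by
    rw [mul_assoc _ (u ^ _), abs_mul, abs_mul,
      abs_of_nonneg (by positivity : 0 ≤ u ^ s * w ^ (-r - 2)), abs_pow, sq_abs]
    gcongr |r * (r + 1)| * ?_ * ?_
    exact (hpow s (-r - 2) (by grind) (by grind)).trans (by gcongr)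
  calc _ ≤ |s * (s - 1) * β ^ 2 * u ^ (s - 2) * w ^ (-r)| +
        |2 * s * r * β * δ * u ^ (s - 1) * w ^ (-r - 1)| +
        |r * (r + 1) * δ ^ 2 * u ^ s * w ^ (-r - 2)| :=
          (abs_add_le _ _).trans (by gcongr; exact abs_sub _ _)
    _ ≤ taylorConst r s * (D ^ 2 * P) := by
        unfold taylorConst; linarith

theorem ratioFunP_eq_mul_rpow_neg (r s : ℝ) {q : ℝ × ℝ} (hq : 0 ≤ q.1 + q.2) :
    ratioFunP r s q = q.1 ^ s * (q.1 + q.2) ^ (-r) := by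
  rw [ratioFunP, Real.rpow_neg hq, div_eq_mul_inv]

theorem fderiv_ratioFunP_apply (r s : ℝ) {a c : ℝ} (ha : 0 < a) (hac : 0 < a + c)
    (v₁ v₂ : ℝ) :
    fderiv ℝ (ratioFunP r s) (a, c) (v₁, v₂) =
      s * v₁ * a ^ (s - 1) * (a + c) ^ (-r) - r * (v₁ + v₂) * a ^ s * (a + c) ^ (-r - 1) := by
  set F : ℝ × ℝ → ℝ := fun q => q.1 ^ s * (q.1 + q.2) ^ (-r)
  have hF : ratioFunP r s =ᶠ[𝓝 (a, c)] F := by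
    filter_upwards [(isOpen_lt continuous_const (continuous_fst.add continuous_snd)).mem_nhds
      (show (a, c) ∈ {q : ℝ × ℝ | 0 < q.1 + q.2} from hac)] with q hq
    exact ratioFunP_eq_mul_rpow_neg r s (le_of_lt hq)
  have hFd : DifferentiableAt ℝ F (a, c) :=
    (differentiableAt_fst.rpow_const (Or.inl ha.ne')).mul
      ((differentiableAt_fst.add differentiableAt_snd).rpow_const (Or.inl hac.ne'))
  have hline : HasDerivAt (fun t => (a + t * v₁) ^ s * (a + c + t * (v₁ + v₂)) ^ (-r))
      (fderiv ℝ F (a, c) (v₁, v₂)) 0 := by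
    refine HasDerivAt.congr_of_eventuallyEq (hFd.hasFDerivAt.hasLineDerivAt (v₁, v₂))
      (.of_forall fun t => ?_)
    simp only [F, Prod.fst_add, Prod.snd_add, Prod.smul_fst, Prod.smul_snd, smul_eq_mul]
    ring_nf
  rw [hF.fderiv_eq, hline.unique (hasDerivAt_rpow_mul_rpow_affine s r a v₁ (a + c) (v₁ + v₂)
    (by simpa using ha.ne') (by simpa using hac.ne'))]
  simp

theorem half_le_add_mul_and_le_two_mul {α β t : ℝ} (ht : t ∈ Icc (0 : ℝ) 1)
    (hβ : |β| ≤ α / 2) : α / 2 ≤ α + t * β ∧ α + t * β ≤ 2 * α := by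
  have htβ : |t * β| ≤ α / 2 := by
    rw [abs_mul, abs_of_nonneg ht.1]
    exact (mul_le_of_le_one_left (abs_nonneg β) ht.2).trans hβ
  constructor <;> linarith [abs_le.1 htβ, (abs_nonneg β).trans hβ]

theorem abs_taylorRem_le (r s : ℝ) {a c x y D : ℝ} (ha : 0 < a) (hc : 0 < c)
    (hxa : |x - a| ≤ a / 2) (hyc : |y - c| ≤ c / 2) (hxD : |x - a| ≤ D)
    (hyD : |y - c| ≤ D) :
    |taylorRem r s a c x y| ≤ taylorConst r s * (D ^ 2 * (a ^ (s - 2) * (a + c) ^ (-r))) := by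
  have hδ : |x - a + (y - c)| ≤ (a + c) / 2 := by linarith [abs_add_le (x - a) (y - c)]
  have hu := fun t (ht : t ∈ Icc (0 : ℝ) 1) => half_le_add_mul_and_le_two_mul ht hxa
  have hw := fun t (ht : t ∈ Icc (0 : ℝ) 1) => half_le_add_mul_and_le_two_mul ht hδ
  have hxy : 0 ≤ x + y := by linarith [(hw 1 (right_mem_Icc.2 zero_le_one)).1]
  convert abs_sub_sub_deriv_le_of_abs_deriv2_le
    (fun t ht => hasDerivAt_rpow_mul_rpow_affine s r a (x - a) (a + c) (x - a + (y - c))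
      (by linarith [(hu t ht).1]) (by linarith [(hw t ht).1]))
    (fun t ht => hasDerivAt_deriv_rpow_mul_rpow_affine s r a (x - a) (a + c) (x - a + (y - c))
      (by linarith [(hu t ht).1]) (by linarith [(hw t ht).1]))
    (fun t ht => abs_deriv2_rpow_mul_rpow_affine_le r s ha (by linarith) (hu t ht).1 (hu t ht).2
      (hw t ht).1 (hw t ht).2 hxD (by linarith [abs_add_le (x - a) (y - c)])) using 2
  rw [taylorRem, ratioFunP_eq_mul_rpow_neg r s hxy, ratioFunP_eq_mul_rpow_neg r s (by positivity),
    fderiv_ratioFunP_apply r s ha (by positivity)]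
  ring_nf

theorem eventually_mul_sqrt_mul_log_le (C' : ℝ) {ε : ℝ} (hε : 0 < ε) :
    ∀ᶠ x : ℝ in atTop, C' * √(x * log x) ≤ ε * x := by
  have hlim : Tendsto (fun x => C' * √(log x / x)) atTop (𝓝 0) := by
    simpa using (isLittleO_log_id_atTop.tendsto_div_nhds_zero.sqrt).const_mul C'
  filter_upwards [hlim.eventually (ge_mem_nhds hε), eventually_gt_atTop 0] with x hx hx0
  rw [show x * log x = x ^ 2 * (log x / x) by field_simp, Real.sqrt_mul (sq_nonneg x),
    Real.sqrt_sq hx0.le, mul_left_comm, mul_comm ε]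
  exact mul_le_mul_of_nonneg_left hx hx0.le

theorem mul_sqrt_mul_log_le_mul_sqrt_mul_log {C' u v : ℝ} (hC' : 0 ≤ C') (hu : 1 ≤ u)
    (huv : u ≤ v) : C' * √(u * log u) ≤ C' * √(v * log v) := by
  refine mul_le_mul_of_nonneg_left (Real.sqrt_le_sqrt ?_) hC'
  exact mul_le_mul huv (Real.log_le_log (by linarith) huv) (Real.log_nonneg hu) (by linarith)

theorem taylorRem_bound_general (r s p : ℝ) (hp0 : 0 < p) (C' : ℝ) (hC' : 0 < C') :
    ∃ C > 0, ∃ N : ℕ, ∀ n m : ℕ, N ≤ n → N ≤ m →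
      ∀ x y : ℝ, |x - n * p| ≤ C' * Real.sqrt (n * Real.log n) →
        |y - m * p| ≤ C' * Real.sqrt (m * Real.log m) →
        |taylorRem r s (n * p) (m * p) x y| ≤
          C * (n : ℝ) ^ (s - 2) * Real.log ((n : ℝ) + (m : ℝ)) /
            ((n : ℝ) + (m : ℝ)) ^ (r - 1) := by
  obtain ⟨N, hN⟩ := eventually_atTop.1 <|
    (tendsto_natCast_atTop_atTop.eventually (eventually_mul_sqrt_mul_log_le C' (half_pos hp0))).and
      (eventually_ge_atTop 1)
  refine ⟨taylorConst r s * C' ^ 2 * p ^ (s - 2) * p ^ (-r) + 1,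
    by have := taylorConst_nonneg r s; positivity, N, fun n m hn hm x y hx hy => ?_⟩
  obtain ⟨hxn, hn1⟩ := hN n hn
  obtain ⟨hym, hm1⟩ := hN m hm
  have hn1' : (1 : ℝ) ≤ n := mod_cast hn1
  have hm1' : (1 : ℝ) ≤ m := mod_cast hm1
  have hlog : 0 ≤ log ((n : ℝ) + m) := log_nonneg (by linarith)
  set D := C' * √((n + m) * log ((n : ℝ) + m))
  have hxD : |x - n * p| ≤ D :=
    hx.trans (mul_sqrt_mul_log_le_mul_sqrt_mul_log hC'.le hn1' (by linarith))
  have hyD : |y - m * p| ≤ D :=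
    hy.trans (mul_sqrt_mul_log_le_mul_sqrt_mul_log hC'.le hm1' (by linarith))
  refine (abs_taylorRem_le r s (by positivity) (by positivity) (by linarith) (by linarith)
    hxD hyD).trans ?_
  have hD2 : D ^ 2 = C' ^ 2 * ((n + m) * log ((n : ℝ) + m)) := by
    rw [mul_pow, Real.sq_sqrt (by positivity)]
  calc taylorConst r s * (D ^ 2 * ((n * p) ^ (s - 2) * (n * p + m * p) ^ (-r)))
      = taylorConst r s * C' ^ 2 * p ^ (s - 2) * p ^ (-r) * n ^ (s - 2) * log ((n : ℝ) + m) /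
          ((n : ℝ) + m) ^ (r - 1) := by
        rw [hD2, show (n : ℝ) * p + m * p = (n + m) * p by ring,
          Real.mul_rpow (by positivity) hp0.le, Real.mul_rpow (by positivity) hp0.le,
          Real.rpow_neg (by positivity), Real.rpow_sub_one (by positivity)]
        field_simp
    _ ≤ _ := by
        gcongr ?_ * _ * _ / _
        linarith

/-- For `r, s > 0`, `p ∈ (0,1)` and every `C' > 0`, there is a constant `C > 0` such that for
all sufficiently large `n, m` and all `x, y` with `|x − np| ≤ C'√(n log n)` and
`|y − mp| ≤ C'√(m log m)`, the first-order Taylor remainder of `f(x,y) = x^s/(x+y)^r`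
about `(np, mp)` satisfies `|Q(x, y)| ≤ C · n^(s−2) · log(n+m) / (n+m)^(r−1)`. -/
theorem taylorRem_bound (r s p : ℝ) (hr : 0 < r) (hs : 0 < s)
    (hp0 : 0 < p) (hp1 : p < 1) (C' : ℝ) (hC' : 0 < C') :
    ∃ C > 0, ∃ N : ℕ, ∀ n m : ℕ, N ≤ n → N ≤ m →
      ∀ x y : ℝ, |x - n * p| ≤ C' * Real.sqrt (n * Real.log n) →
        |y - m * p| ≤ C' * Real.sqrt (m * Real.log m) →
        |taylorRem r s (n * p) (m * p) x y| ≤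
          C * (n : ℝ) ^ (s - 2) * Real.log ((n : ℝ) + (m : ℝ)) /
            ((n : ℝ) + (m : ℝ)) ^ (r - 1) :=
  taylorRem_bound_general r s p hp0 C' hC'
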